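/- arXiv:1310.7050 — 5 statements merged into one kernel-verified Lean document; each statement's English description precedes it below -/
import Mathlib

section
/- Let W be a finite-dimensional complex vector space and E a linear operator on W such that E^q = id for some prime q. Then Tr(E)^q ≡ dim W (mod q) in the ring of algebraic integers; in particular, if Tr(E) is a rational integer, then Tr(E) ≡ dim W (mod q). -/
open Polynomial

/-- Auxiliary: a complex `q`-th root of unity is an algebraic integer. -/
lemma aux_isIntegral_of_pow_eq_one {q : ℕ} (hq : q ≠ 0) {μ : ℂ} (hμ : μ ^ q = 1) :
    IsIntegral ℤ μ := by
  refine ⟨X ^ q - 1, ?_, ?_⟩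
  · simpa using monic_X_pow_sub_C (1 : ℤ) hq
  · simp [hμ]

/-- Auxiliary: `q` is not a unit in the ring of algebraic integers. -/
lemma aux_not_isUnit {q : ℕ} (hq : q.Prime) :
    ¬ IsUnit ((q : ℕ) : integralClosure ℤ ℂ) := by
  rw [isUnit_iff_exists_inv]
  rintro ⟨y, hy⟩
  have hyC : ((q : ℂ)) * (y : ℂ) = 1 := by
    have := congrArg (Subalgebra.val _) hy
    simpa using this
  have hq0 : (q : ℂ) ≠ 0 := by exact_mod_cast hq.ne_zero
  have hyval : (y : ℂ) = (q : ℂ)⁻¹ := by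
    field_simp
    linear_combination hyC
  have hint : IsIntegral ℤ ((q : ℚ)⁻¹ : ℚ) := by
    have h1 : IsIntegral ℤ (y : ℂ) := y.2
    rw [hyval] at h1
    have h2 : algebraMap ℚ ℂ ((q : ℚ)⁻¹) = (q : ℂ)⁻¹ := by push_cast; rfl
    rw [← h2] at h1
    exact (isIntegral_algebraMap_iff (algebraMap ℚ ℂ).injective).mp h1
  obtain ⟨z, hz⟩ := IsIntegrallyClosed.isIntegral_iff.mp hint
  have hqQ : ((q : ℚ)) ≠ 0 := by exact_mod_cast hq.ne_zero
  have h3 : (q : ℚ) * (z : ℚ) = 1 := by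
    rw [show ((z : ℚ)) = (q : ℚ)⁻¹ from hz]
    field_simp
  have hzz : (q : ℤ) * z = 1 := by exact_mod_cast h3
  have h4 : (q : ℤ) ∣ 1 := ⟨z, hzz.symm⟩
  have := Int.le_of_dvd one_pos h4
  have := hq.one_lt
  omega

/-- Divisibility lemma in an abstract commutative ring. -/
lemma aux_dvd {R : Type*} [CommRing R] (q : ℕ) (hq : q.Prime)
    (hnu : ¬ IsUnit ((q : ℕ) : R)) (s : Multiset R) (hpow : ∀ a ∈ s, a ^ q = 1) :
    ((q : ℕ) : R) ∣ s.sum ^ q - (Multiset.card s : R) := by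
  haveI : Fact q.Prime := ⟨hq⟩
  haveI hchar := CharP.quotient R q hnu
  rw [← Ideal.Quotient.eq_zero_iff_dvd]
  set π := Ideal.Quotient.mk (Ideal.span ({((q : ℕ) : R)} : Set R)) with hπ
  have h1 : π s.sum ^ q = ((s.map π).map (· ^ q)).sum := by
    rw [map_multiset_sum]
    exact multiset_sum_pow_char q _
  have h2 : ((s.map π).map (· ^ q)) = s.map (fun _ => 1) := by
    rw [Multiset.map_map]
    apply Multiset.map_congr rfl
    intro a ha
    simp only [Function.comp_apply]
    rw [← map_pow, hpow a ha, map_one]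
  have h3 : (s.map fun _ => (1 : R ⧸ Ideal.span ({((q : ℕ) : R)} : Set R))).sum
      = (Multiset.card s : R ⧸ Ideal.span ({((q : ℕ) : R)} : Set R)) := by
    rw [Multiset.map_const', Multiset.sum_replicate, nsmul_eq_mul, mul_one]
  rw [map_sub, map_pow, h1, h2, h3, map_natCast, sub_self]

set_option maxHeartbeats 1000000 in
set_option synthInstance.maxHeartbeats 1000000 in
lemma aux_key (q : ℕ) (hq : q.Prime) (t : Multiset ℂ) (ht : ∀ μ ∈ t, μ ^ q = 1) :
    IsIntegral ℤ ((t.sum ^ q - (Multiset.card t : ℂ)) / (q : ℂ)) := by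
  have hint : ∀ μ ∈ t, IsIntegral ℤ μ := fun μ hμ =>
    aux_isIntegral_of_pow_eq_one hq.ne_zero (ht μ hμ)
  set s : Multiset (integralClosure ℤ ℂ) :=
    t.attach.map (fun x => ⟨x.1, hint x.1 x.2⟩) with hs_def
  have hmap : s.map (algebraMap (integralClosure ℤ ℂ) ℂ) = t := by
    rw [hs_def, Multiset.map_map]
    exact Multiset.attach_map_val t
  have hcard : Multiset.card s = Multiset.card t := by
    rw [hs_def, Multiset.card_map, Multiset.card_attach]
  have hpow : ∀ a ∈ s, a ^ q = 1 := by
    rintro a ha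
    rw [hs_def] at ha
    obtain ⟨x, _, rfl⟩ := Multiset.mem_map.mp ha
    ext
    push_cast
    exact ht x.1 x.2
  obtain ⟨x, hx⟩ := aux_dvd q hq (aux_not_isUnit hq) s hpow
  have h := congrArg (algebraMap (integralClosure ℤ ℂ) ℂ) hx
  rw [map_sub, map_mul, map_pow, map_natCast, map_natCast, map_multiset_sum, hmap, hcard] at h
  have hq0 : (q : ℂ) ≠ 0 := by exact_mod_cast hq.ne_zero
  rw [h, mul_div_cancel_left₀ _ hq0]
  exact x.2

/-- Auxiliary: roots of the characteristic polynomial of a matrix `M` with `M ^ q = 1`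
are `q`-th roots of unity. -/
lemma aux_roots (q : ℕ) {n : Type*} [Fintype n] [DecidableEq n]
    (M : Matrix n n ℂ) (hM : M ^ q = 1) :
    ∀ μ ∈ M.charpoly.roots, μ ^ q = 1 := by
  intro μ hμ
  have h0 : M.charpoly.IsRoot μ := (Polynomial.mem_roots'.mp hμ).2
  have hdet : ((Matrix.diagonal fun _ : n => μ) - M).det = 0 := by
    have h1 : Polynomial.eval μ M.charpoly
        = ((M.charmatrix).map (Polynomial.eval μ)).det := by
      rw [Matrix.charpoly]
      exact RingHom.map_det (Polynomial.evalRingHom μ) M.charmatrix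
    have h2 : (M.charmatrix).map (Polynomial.eval μ)
        = (Matrix.diagonal fun _ : n => μ) - M := by
      ext i j
      by_cases hij : i = j
      · subst hij
        simp [Matrix.charmatrix_apply_eq]
      · simp [Matrix.charmatrix_apply_ne _ _ _ hij, Matrix.diagonal_apply_ne _ hij]
    rw [← h2, ← h1]
    exact h0
  obtain ⟨v, hv, hmv⟩ := (Matrix.exists_mulVec_eq_zero_iff).mpr hdet
  have hMv : M.mulVec v = μ • v := by
    have := hmv
    rw [Matrix.sub_mulVec, sub_eq_zero] at this
    rw [← this]
    funext i
    rw [Matrix.mulVec_diagonal]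
    rfl
  have hk : ∀ k : ℕ, (M ^ k).mulVec v = μ ^ k • v := by
    intro k
    induction k with
    | zero => simp [Matrix.one_mulVec]
    | succ k ih =>
      rw [pow_succ, ← Matrix.mulVec_mulVec, hMv, Matrix.mulVec_smul, ih, smul_smul,
        pow_succ]
      ring_nf
  have hqv : v = μ ^ q • v := by
    have := hk q
    rwa [hM, Matrix.one_mulVec] at this
  obtain ⟨i, hi⟩ := Function.ne_iff.mp hv
  have : (μ ^ q - 1) * v i = 0 := by
    have := congrFun hqv i
    simp only [Pi.smul_apply, smul_eq_mul] at this
    linear_combination -this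
  rcases mul_eq_zero.mp this with h | h
  · exact sub_eq_zero.mp h
  · exact absurd h hi

set_option maxHeartbeats 1000000 in
/-- Trace of a linear operator of finite order `q` (prime) on a finite-dimensional
complex vector space: `Tr(E)^q ≡ dim W (mod q)` in the algebraic integers; if
`Tr(E)` is a rational integer then `Tr(E) ≡ dim W (mod q)` in `ℤ`. -/
theorem stmt_0 {W : Type*} [AddCommGroup W] [Module ℂ W] [FiniteDimensional ℂ W]
    (q : ℕ) (hq : q.Prime) (E : W →ₗ[ℂ] W) (hE : E ^ q = 1) :
    IsIntegral ℤ (((LinearMap.trace ℂ W E) ^ q - (Module.finrank ℂ W : ℂ)) / (q : ℂ)) ∧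
      (∀ m : ℤ, LinearMap.trace ℂ W E = (m : ℂ) →
        (q : ℤ) ∣ (m - (Module.finrank ℂ W : ℤ))) := by
  haveI : Fact q.Prime := ⟨hq⟩
  set b := Module.finBasis ℂ W with hb
  set M := LinearMap.toMatrixAlgEquiv b E with hM_def
  have hMq : M ^ q = 1 := by
    rw [hM_def, ← map_pow, hE, map_one]
  have htr : LinearMap.trace ℂ W E = Matrix.trace M := by
    rw [LinearMap.trace_eq_matrix_trace ℂ b E]
    rfl
  have htr2 : Matrix.trace M = M.charpoly.roots.sum :=
    Matrix.trace_eq_sum_roots_charpoly M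
  have hcard : (Multiset.card M.charpoly.roots : ℕ) = Module.finrank ℂ W := by
    have h1 : Multiset.card M.charpoly.roots = M.charpoly.natDegree :=
      (Polynomial.splits_iff_card_roots).mp (IsAlgClosed.splits M.charpoly)
    rw [h1, Matrix.charpoly_natDegree_eq_dim, Fintype.card_fin]
  have hroots := aux_roots q M hMq
  have key := aux_key q hq M.charpoly.roots hroots
  rw [← htr2, ← htr, hcard] at key
  refine ⟨key, ?_⟩
  intro m hm
  rw [hm] at key
  set n : ℕ := Module.finrank ℂ W with hn
  have halg : algebraMap ℚ ℂ (((m : ℚ) ^ q - (n : ℚ)) / (q : ℚ))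
      = ((m : ℂ) ^ q - (n : ℂ)) / (q : ℂ) := by
    push_cast
    rfl
  rw [← halg] at key
  have hint := (isIntegral_algebraMap_iff (algebraMap ℚ ℂ).injective).mp key
  obtain ⟨z, hz⟩ := IsIntegrallyClosed.isIntegral_iff.mp hint
  have hqQ : ((q : ℚ)) ≠ 0 := by exact_mod_cast hq.ne_zero
  have hz' : (z : ℚ) = ((m : ℚ) ^ q - (n : ℚ)) / (q : ℚ) := by
    rw [← hz]; simp
  have hzq : (m : ℚ) ^ q - (n : ℚ) = (q : ℚ) * (z : ℚ) := by
    rw [hz']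
    field_simp
  have hzZ : (m : ℤ) ^ q - (n : ℤ) = (q : ℤ) * z := by exact_mod_cast hzq
  have hd1 : (q : ℤ) ∣ m ^ q - n := ⟨z, hzZ⟩
  have hd2 : (q : ℤ) ∣ m ^ q - m := by
    have : ((m ^ q - m : ℤ) : ZMod q) = 0 := by
      push_cast
      rw [ZMod.pow_card]
      ring
    exact (ZMod.intCast_zmod_eq_zero_iff_dvd _ _).mp this
  have : m - n = (m ^ q - n) - (m ^ q - m) := by ring
  rw [this]
  exact dvd_sub hd1 hd2
end

section
/- Let G be an abelian subgroup of the symmetric group S_r. Then |G| ≤ 3^{r/3}. -/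
lemma cube_le_three_pow (n : ℕ) : n ^ 3 ≤ 3 ^ n := by
  match n with
  | 0 => decide
  | 1 => decide
  | 2 => decide
  | (m + 3) =>
    induction m with
    | zero => decide
    | succ k ih =>
      have h := ih
      have : (k + 4) ^ 3 ≤ 3 * (k + 3) ^ 3 := by
        nlinarith [Nat.zero_le k, Nat.zero_le (k * k * k), Nat.zero_le (k * k)]
      calc (k + 4) ^ 3 ≤ 3 * (k + 3) ^ 3 := this
        _ ≤ 3 * 3 ^ (k + 3) := by omega
        _ = 3 ^ (k + 4) := by ring

lemma nat_le_cbrt_pow (n : ℕ) : (n : ℝ) ≤ ((3 : ℝ) ^ ((1 : ℝ) / 3)) ^ n := by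
  set c : ℝ := (3 : ℝ) ^ ((1 : ℝ) / 3) with hc
  have hc0 : 0 ≤ c := Real.rpow_nonneg (by norm_num) _
  have hc3 : c ^ 3 = 3 := by
    rw [hc, ← Real.rpow_natCast ((3:ℝ) ^ ((1:ℝ)/3)) 3, ← Real.rpow_mul (by norm_num)]
    norm_num
  have h1 : (n : ℝ) ^ 3 ≤ (c ^ n) ^ 3 := by
    have : (c ^ n) ^ 3 = 3 ^ n := by rw [← pow_mul, mul_comm, pow_mul, hc3]
    rw [this]
    calc (n : ℝ) ^ 3 = ((n ^ 3 : ℕ) : ℝ) := by push_cast; ring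
      _ ≤ ((3 ^ n : ℕ) : ℝ) := by exact_mod_cast cube_le_three_pow n
      _ = 3 ^ n := by push_cast; ring
  exact le_of_pow_le_pow_left₀ (by norm_num) (pow_nonneg hc0 n) h1

/-- An abelian subgroup of the symmetric group `S_r` has order at most `3^(r/3)`. -/
theorem stmt_4 (r : ℕ) (H : Subgroup (Equiv.Perm (Fin r)))
    (hH : ∀ a ∈ H, ∀ b ∈ H, a * b = b * a) :
    (Nat.card H : ℝ) ≤ (3 : ℝ) ^ ((r : ℝ) / 3) := by
  classical
  set Ω := MulAction.orbitRel.Quotient H (Fin r) with hΩ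
  have key : Function.Injective
      (fun g : H => fun ω : Ω => (⟨g • (Quotient.out ω), MulAction.mem_orbit _ _⟩ :
        MulAction.orbit H (Quotient.out ω))) := by
    intro g g' h
    have hfix : ∀ x : Fin r, g • x = g' • x := by
      intro x
      have hrel : Quotient.out (⟦x⟧ : Ω) ∈ MulAction.orbit H x :=
        Quotient.mk_out (s := MulAction.orbitRel H (Fin r)) x
      obtain ⟨k, hk⟩ := hrel
      have hout : g • (Quotient.out (⟦x⟧ : Ω)) = g' • (Quotient.out (⟦x⟧ : Ω)) := by
        have := congrFun h (⟦x⟧ : Ω)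
        exact Subtype.ext_iff.mp this
      have hcomm : ∀ u : H, u * k = k * u := by
        intro u
        have := hH u u.2 k k.2
        exact Subtype.ext this
      have hx : x = k⁻¹ • (Quotient.out (⟦x⟧ : Ω)) := by
        rw [← hk]
        simp
      rw [hx, smul_smul, smul_smul]
      have h1 : g * k⁻¹ = k⁻¹ * g := by
        have := hcomm g
        rw [mul_inv_eq_iff_eq_mul, mul_assoc, this, ← mul_assoc, inv_mul_cancel, one_mul]
      have h2 : g' * k⁻¹ = k⁻¹ * g' := by
        have := hcomm g'
        rw [mul_inv_eq_iff_eq_mul, mul_assoc, this, ← mul_assoc, inv_mul_cancel, one_mul]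
      rw [h1, h2, ← smul_smul, ← smul_smul, hout]
    apply Subtype.ext
    apply Equiv.ext
    intro x
    have := hfix x
    simpa [Subgroup.smul_def, Equiv.Perm.smul_def] using this
  have hfin : ∀ ω : Ω, Finite (MulAction.orbit H (Quotient.out ω)) := fun ω =>
    Set.Finite.to_subtype (Set.toFinite _)
  have hcard : Nat.card H ≤ ∏ ω : Ω, Nat.card (MulAction.orbit H (Quotient.out ω)) := by
    rw [← Nat.card_pi]
    exact Nat.card_le_card_of_injective _ key
  have hsum : ∑ ω : Ω, Nat.card (MulAction.orbit H (Quotient.out ω)) = r := by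
    have e := MulAction.selfEquivSigmaOrbits H (Fin r)
    have h2 := Nat.card_congr e
    simp only [Nat.card_eq_fintype_card, Fintype.card_fin, Fintype.card_sigma] at h2 ⊢
    exact h2.symm
  set c : ℝ := (3 : ℝ) ^ ((1 : ℝ) / 3) with hcdef
  have hc0 : 0 ≤ c := Real.rpow_nonneg (by norm_num) _
  have hstep : (Nat.card H : ℝ) ≤ c ^ r := by
    calc (Nat.card H : ℝ)
        ≤ ((∏ ω : Ω, Nat.card (MulAction.orbit H (Quotient.out ω)) : ℕ) : ℝ) := by
          exact_mod_cast hcard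
      _ = ∏ ω : Ω, ((Nat.card (MulAction.orbit H (Quotient.out ω)) : ℕ) : ℝ) := by
          push_cast; ring
      _ ≤ ∏ ω : Ω, c ^ (Nat.card (MulAction.orbit H (Quotient.out ω))) := by
          apply Finset.prod_le_prod
          · intro i _; positivity
          · intro i _; exact nat_le_cbrt_pow _
      _ = c ^ (∑ ω : Ω, Nat.card (MulAction.orbit H (Quotient.out ω))) := by
          rw [← Finset.prod_pow_eq_pow_sum]
      _ = c ^ r := by rw [hsum]
  have hfinal : c ^ r = (3 : ℝ) ^ ((r : ℝ) / 3) := by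
    rw [hcdef, ← Real.rpow_natCast ((3:ℝ) ^ ((1:ℝ)/3)) r, ← Real.rpow_mul (by norm_num)]
    ring_nf
  rwa [hfinal] at hstep
end

section
/- (Landau's theorem) For each positive integer n, there are only finitely many finite groups G, up to isomorphism, having exactly n conjugacy classes (equivalently, exactly n irreducible complex representations). -/
/-- Any `n`-term sum of unit fractions equal to `q` has bounded denominators. -/
lemma unitFraction_bound : ∀ (n : ℕ) (q : ℚ), ∃ B : ℕ, ∀ (ι : Type) (s : Finset ι) (f : ι → ℕ),
    s.card = n → (∀ i ∈ s, 0 < f i) → ∑ i ∈ s, (1 : ℚ) / (f i) = q → ∀ i ∈ s, f i ≤ B := by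
  intro n
  induction n with
  | zero =>
    intro q
    exact ⟨0, fun ι s f hcard _ _ i hi => absurd hi (by simp [Finset.card_eq_zero.mp hcard])⟩
  | succ n ih =>
    intro q
    classical
    by_cases hq : 0 < q
    · set M := ⌈(n + 1 : ℚ) / q⌉₊ with hM
      choose B' hB' using fun m : ℕ => ih (q - 1 / m)
      refine ⟨max M ((Finset.Icc 1 M).sup B'), ?_⟩
      intro ι s f hcard hpos hsum i hi
      obtain ⟨j, hj, hjmin⟩ := s.exists_min_image f ⟨i, hi⟩
      have hfjpos : 0 < f j := hpos j hj
      have hfjQ : (0 : ℚ) < (f j : ℚ) := by exact_mod_cast hfjpos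
      -- the minimal denominator is at most M
      have hle : (f j : ℚ) ≤ (n + 1 : ℚ) / q := by
        have hsum_le : q ≤ (s.card : ℚ) * (1 / f j) := by
          rw [← hsum]
          calc ∑ i ∈ s, (1 : ℚ) / f i ≤ ∑ _i ∈ s, (1 : ℚ) / f j := by
                refine Finset.sum_le_sum fun i hi => ?_
                have h1 : (0 : ℚ) < (f i : ℚ) := by exact_mod_cast hpos i hi
                exact one_div_le_one_div_of_le hfjQ (by exact_mod_cast hjmin i hi)
            _ = (s.card : ℚ) * (1 / f j) := by rw [Finset.sum_const, nsmul_eq_mul]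
        rw [hcard] at hsum_le
        rw [le_div_iff₀ hq]
        have := mul_le_mul_of_nonneg_left hsum_le (le_of_lt hfjQ)
        calc (f j : ℚ) * q ≤ (f j : ℚ) * ((n + 1 : ℕ) * (1 / f j)) := this
          _ = (n + 1 : ℚ) := by field_simp; push_cast; ring
      have hfjM : f j ≤ M := by
        calc f j = ⌈(f j : ℚ)⌉₊ := by rw [Nat.ceil_natCast]
          _ ≤ M := Nat.ceil_mono hle
      -- remaining sum
      have hsum' : ∑ i ∈ s.erase j, (1 : ℚ) / f i = q - 1 / f j := by
        have h := Finset.sum_erase_add s (fun i => (1 : ℚ) / f i) hj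
        linarith [hsum, h]
      have hrest := hB' (f j) ι (s.erase j) f
        (by rw [Finset.card_erase_of_mem hj, hcard]; rfl)
        (fun i hi => hpos i (Finset.mem_of_mem_erase hi)) hsum'
      rcases eq_or_ne i j with rfl | hne
      · exact le_max_of_le_left hfjM
      · refine le_max_of_le_right ?_
        exact le_trans (hrest i (Finset.mem_erase.mpr ⟨hne, hi⟩))
          (Finset.le_sup (Finset.mem_Icc.mpr ⟨hfjpos, hfjM⟩))
    · refine ⟨0, fun ι s f hcard hpos hsum i hi => absurd hq ?_⟩
      have hne : s.Nonempty := ⟨i, hi⟩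
      have : 0 < ∑ i ∈ s, (1 : ℚ) / f i := by
        refine Finset.sum_pos (fun i hi => ?_) hne
        have : (0 : ℚ) < (f i : ℚ) := by exact_mod_cast hpos i hi
        positivity
      rw [hsum] at this
      exact fun h => h this

/-- Landau's theorem: for each `n` there are only finitely many finite groups with
exactly `n` conjugacy classes, up to isomorphism; equivalently, the order of such
a group is bounded in terms of `n`. -/
theorem stmt_10 (n : ℕ) :
    ∃ B : ℕ, ∀ (G : Type) (_ : Group G) (_ : Finite G),
      Nat.card (ConjClasses G) = n → Nat.card G ≤ B := by
  obtain ⟨B, hB⟩ := unitFraction_bound n 1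
  refine ⟨B, fun G _ _ hn => ?_⟩
  classical
  cases nonempty_fintype (ConjClasses G)
  set N := Nat.card G with hN
  have hNpos : 0 < N := Nat.card_pos
  set c : ConjClasses G → ℕ := fun x => Nat.card x.carrier with hc
  have hcpos : ∀ x : ConjClasses G, 0 < c x := by
    intro x
    obtain ⟨g, rfl⟩ := x.exists_rep
    have hne : Nonempty (ConjClasses.mk g).carrier := ⟨⟨g, ConjClasses.mem_carrier_mk⟩⟩
    exact Nat.card_pos
  have hcdvd : ∀ x : ConjClasses G, c x ∣ N := by
    intro x
    obtain ⟨g, rfl⟩ := x.exists_rep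
    have h1 : c (ConjClasses.mk g) = Nat.card (MulAction.orbit (ConjAct G) g) := by
      rw [hc]; rw [ConjAct.orbit_eq_carrier_conjClasses]
    have h2 : Nat.card (MulAction.orbit (ConjAct G) g)
        = Nat.card (ConjAct G ⧸ MulAction.stabilizer (ConjAct G) g) :=
      Nat.card_congr (MulAction.orbitEquivQuotientStabilizer (ConjAct G) g)
    have h3 := Subgroup.card_quotient_dvd_card (MulAction.stabilizer (ConjAct G) g)
    have h4 : Nat.card (ConjAct G) = N := Nat.card_congr ConjAct.ofConjAct.toEquiv
    rw [h1, h2]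
    rwa [h4] at h3
  have hsumc : ∑ x : ConjClasses G, c x = N := by
    have := Group.sum_card_conj_classes_eq_card G
    rw [finsum_eq_sum_of_fintype] at this
    rw [hN, ← this]
    exact Finset.sum_congr rfl fun x _ => (Nat.card_coe_set_eq x.carrier)
  set f : ConjClasses G → ℕ := fun x => N / c x with hf
  have hfc : ∀ x, f x * c x = N := fun x => Nat.div_mul_cancel (hcdvd x)
  have hfpos : ∀ x, 0 < f x := fun x =>
    Nat.div_pos (Nat.le_of_dvd hNpos (hcdvd x)) (hcpos x)
  have hsum : ∑ x : ConjClasses G, (1 : ℚ) / f x = 1 := by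
    have key : ∀ x : ConjClasses G, (1 : ℚ) / f x = (c x : ℚ) / N := by
      intro x
      have h1 : ((f x : ℚ)) * (c x : ℚ) = (N : ℚ) := by exact_mod_cast hfc x
      have h2 : (f x : ℚ) ≠ 0 := by exact_mod_cast (hfpos x).ne'
      have h3 : (N : ℚ) ≠ 0 := by exact_mod_cast hNpos.ne'
      field_simp
      linarith [h1]
    rw [Finset.sum_congr rfl fun x _ => key x, ← Finset.sum_div]
    rw [show ∑ x : ConjClasses G, (c x : ℚ) = (N : ℚ) by rw [← Nat.cast_sum, hsumc]]
    exact div_self (by exact_mod_cast hNpos.ne')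
  have hcard : (Finset.univ : Finset (ConjClasses G)).card = n := by
    rw [Finset.card_univ, ← Nat.card_eq_fintype_card, hn]
  have hbound := hB (ConjClasses G) Finset.univ f hcard
    (fun i _ => hfpos i) (by simpa using hsum) (ConjClasses.mk 1) (Finset.mem_univ _)
  have h1 : c (ConjClasses.mk (1 : G)) = 1 := by
    have hcar : (ConjClasses.mk (1 : G)).carrier = {1} := by
      ext a
      simp [ConjClasses.mem_carrier_iff_mk_eq, ConjClasses.mk_eq_mk_iff_isConj, isConj_comm,
        isConj_one_right]
    rw [hc]
    simp only [hcar]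
    simp
  have hfN : f (ConjClasses.mk (1 : G)) = N := by rw [hf]; simp [h1]
  rw [hfN] at hbound
  exact hbound
end

section
/- For each positive integer n, the equation 1 = Σ_{i=1}^n 1/x_i has only finitely many solutions in positive integers (x_1, …, x_n). -/
theorem stmt_11_aux (n : ℕ) : ∀ q : ℚ,
    { x : Fin n → ℕ | (∀ i, 0 < x i) ∧ ∑ i, (1 : ℚ) / (x i) = q }.Finite := by
  induction n with
  | zero => intro q; exact Set.toFinite _
  | succ n ih =>
    intro q
    by_cases hq : q ≤ 0
    · have : { x : Fin (n+1) → ℕ | (∀ i, 0 < x i) ∧ ∑ i, (1 : ℚ) / (x i) = q } = ∅ := by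
        ext x
        simp only [Set.mem_setOf_eq, Set.mem_empty_iff_false, iff_false, not_and]
        intro hx hsum
        have hpos : 0 < ∑ i, (1:ℚ)/(x i) := by
          apply Finset.sum_pos
          · intro i _
            have : (0:ℚ) < x i := by exact_mod_cast hx i
            positivity
          · exact Finset.univ_nonempty
        rw [hsum] at hpos; linarith
      rw [this]; exact Set.finite_empty
    · push_neg at hq
      set K : ℕ := ⌈((n+1 : ℚ))/q⌉₊ with hK
      have hcov : { x : Fin (n+1) → ℕ | (∀ i, 0 < x i) ∧ ∑ i, (1:ℚ)/(x i) = q } ⊆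
          ⋃ i : Fin (n+1), ⋃ k ∈ Finset.range (K+1),
            {x : Fin (n+1) → ℕ | x i = k ∧
              (x ∘ i.succAbove) ∈ {y : Fin n → ℕ | (∀ j, 0 < y j) ∧
                ∑ j, (1:ℚ)/(y j) = q - 1/k}} := by
        rintro x ⟨hx, hsum⟩
        -- find i with x i ≤ K
        have hi : ∃ i, x i ≤ K := by
          by_contra h
          push_neg at h
          have hKq : ((n:ℚ)+1)/q ≤ K := Nat.le_ceil _
          have hlt : ∀ i, (1:ℚ)/(x i) < q/(n+1) := by
            intro i
            have h1 : (K:ℚ) + 1 ≤ x i := by exact_mod_cast h i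
            have h2 : ((n:ℚ)+1)/q < x i := lt_of_le_of_lt hKq (by linarith)
            have hn1 : (0:ℚ) < (n:ℚ)+1 := by positivity
            have hx0 : (0:ℚ) < x i := lt_trans (by positivity) h2
            rw [div_lt_div_iff₀ hx0 hn1]
            have := (div_lt_iff₀ hq).mp h2
            nlinarith
          have : ∑ i, (1:ℚ)/(x i) < ∑ _i : Fin (n+1), q/(n+1) := by
            apply Finset.sum_lt_sum_of_nonempty Finset.univ_nonempty
            intro i _; exact hlt i
          rw [hsum] at this
          simp only [Finset.sum_const, Finset.card_univ, Fintype.card_fin, nsmul_eq_mul] at this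
          have heq : ((n+1:ℕ):ℚ) * (q/((n:ℚ)+1)) = q := by
            have hn1 : ((n:ℚ)+1) ≠ 0 := by positivity
            push_cast
            field_simp
          rw [heq] at this
          exact lt_irrefl _ this
        obtain ⟨i, hiK⟩ := hi
        refine Set.mem_iUnion.mpr ⟨i, Set.mem_iUnion.mpr ⟨x i, Set.mem_iUnion.mpr
          ⟨Finset.mem_range.mpr (Nat.lt_succ_of_le hiK), ?_, ?_, ?_⟩⟩⟩
        · rfl
        · intro j; exact hx _
        · have hs := Fin.sum_univ_succAbove (fun j => (1:ℚ)/(x j)) i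
          rw [hs] at hsum
          simp only [Function.comp]
          linarith
      refine Set.Finite.subset ?_ hcov
      refine Set.finite_iUnion fun i => ?_
      refine Set.Finite.biUnion (Finset.range (K+1)).finite_toSet fun k _ => ?_
      apply Set.Finite.of_finite_image (f := fun x : Fin (n+1) → ℕ => x ∘ i.succAbove)
      · apply Set.Finite.subset (ih (q - 1/k))
        rintro y ⟨x, hx, rfl⟩
        exact hx.2
      · rintro x ⟨hxk, -⟩ y ⟨hyk, -⟩ hxy
        funext j
        by_cases hj : j = i
        · subst hj; rw [hxk, hyk]
        · obtain ⟨l, rfl⟩ := Fin.exists_succAbove_eq hj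
          exact congrFun hxy l

/-- For each `n`, the equation `1 = Σ_{i=1}^n 1/x_i` has only finitely many
solutions in positive integers. -/
theorem stmt_11 (n : ℕ) :
    { x : Fin n → ℕ | (∀ i, 0 < x i) ∧ ∑ i, (1 : ℚ) / (x i) = 1 }.Finite := by
  exact stmt_11_aux n 1
end

section
/- Let (S,T) be the modular data of a modular category C of rank r, with N = ord(T). Then N ≤ 2^{2r/3+8}·3^{2r/3}. -/
open scoped Classical

lemma aux_cube_le_three_pow : ∀ n : ℕ, n ^ 3 ≤ 3 ^ n := by
  have h : ∀ m : ℕ, (m + 3) ^ 3 ≤ 3 ^ (m + 3) := by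
    intro m
    induction m with
    | zero => norm_num
    | succ k ih =>
      calc (k + 1 + 3) ^ 3 ≤ 3 * (k + 3) ^ 3 := by nlinarith [k.zero_le, sq_nonneg k, Nat.zero_le (k*k*k)]
        _ ≤ 3 * 3 ^ (k + 3) := by omega
        _ = 3 ^ (k + 1 + 3) := by ring
  intro n
  match n with
  | 0 => norm_num
  | 1 => norm_num
  | 2 => norm_num
  | (m + 3) => exact h m

lemma aux_abelian_perm_card_cube_le :
    ∀ (n : ℕ) (α : Type) [Fintype α], Fintype.card α ≤ n →
      ∀ (A : Type) [Group A], (∀ a b : A, a * b = b * a) →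
        ∀ (ρ : A →* Equiv.Perm α), Function.Injective ρ →
          Nat.card A ^ 3 ≤ 3 ^ Fintype.card α := by
  intro n
  induction n with
  | zero =>
    intro α _ hcard A _ hA ρ hρ
    haveI : IsEmpty α := Fintype.card_eq_zero_iff.mp (Nat.le_zero.mp hcard)
    haveI : Subsingleton A := ⟨fun a b => hρ (Equiv.ext fun x => isEmptyElim x)⟩
    haveI : Unique A := uniqueOfSubsingleton 1
    rw [Nat.card_unique, one_pow]
    exact Nat.one_le_pow _ _ (by norm_num)
  | succ m ih =>
    intro α _ hcard A _ hA ρ hρ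
    by_cases h0 : Fintype.card α = 0
    · haveI : IsEmpty α := Fintype.card_eq_zero_iff.mp h0
      haveI : Subsingleton A := ⟨fun a b => hρ (Equiv.ext fun x => isEmptyElim x)⟩
      haveI : Unique A := uniqueOfSubsingleton 1
      rw [Nat.card_unique, one_pow]
      exact Nat.one_le_pow _ _ (by norm_num)
    · obtain ⟨x⟩ : Nonempty α := Fintype.card_pos_iff.mp (Nat.pos_of_ne_zero h0)
      haveI : Finite A := Finite.of_injective ρ hρ
      letI : MulAction A α := MulAction.compHom α ρ
      have hsmul : ∀ (a : A) (y : α), a • y = ρ a y := fun _ _ => rfl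
      have hxO : x ∈ MulAction.orbit A x := MulAction.mem_orbit_self x
      have hinv : ∀ (a : A) (y : α),
          a • y ∈ MulAction.orbit A x ↔ y ∈ MulAction.orbit A x := by
        intro a y
        simp only [MulAction.mem_orbit_iff]
        constructor
        · rintro ⟨b, hb⟩
          exact ⟨a⁻¹ * b, by rw [mul_smul, hb, inv_smul_smul]⟩
        · rintro ⟨b, hb⟩
          exact ⟨a * b, by rw [mul_smul, hb]⟩
      have hSfix : ∀ (s : MulAction.stabilizer A x) (y : α),
          y ∈ MulAction.orbit A x → (s : A) • y = y := by
        intro s y hy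
        rw [MulAction.mem_orbit_iff] at hy
        obtain ⟨b, rfl⟩ := hy
        rw [← mul_smul, hA, mul_smul]
        congr 1
        exact s.2
      have hmem : ∀ (s : MulAction.stabilizer A x) (y : α),
          y ∉ MulAction.orbit A x ↔ ρ (s : A) y ∉ MulAction.orbit A x := by
        intro s y
        rw [← hsmul]
        exact not_congr (hinv _ y).symm
      set ρ' : MulAction.stabilizer A x →* Equiv.Perm {y : α // y ∉ MulAction.orbit A x} :=
        { toFun := fun s => Equiv.Perm.subtypePerm (ρ (s : A)) (fun y => (hmem s y).symm)
          map_one' := by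
            ext y
            simp
          map_mul' := by
            intro s t
            ext y
            change (ρ ((s * t : MulAction.stabilizer A x) : A)) (y : α) = (ρ (s : A)) ((ρ (t : A)) (y : α))
            simp [Equiv.Perm.mul_apply] } with hρ'def
      have hρ'inj : Function.Injective ρ' := by
        rw [injective_iff_map_eq_one]
        intro s hs
        have hone : ρ (s : A) = 1 := by
          ext y
          by_cases hy : y ∈ MulAction.orbit A x
          · rw [← hsmul]
            exact hSfix s y hy
          · have := congrArg (fun e => ((e ⟨y, hy⟩ : {y : α // y ∉ MulAction.orbit A x}) : α)) hs
            simpa [hρ'def, Equiv.Perm.subtypePerm_apply] using this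
        have : (s : A) = 1 := hρ (hone.trans (map_one ρ).symm)
        exact Subtype.ext this
      have hScomm : ∀ a b : MulAction.stabilizer A x, a * b = b * a := by
        intro a b
        exact Subtype.ext (hA a.1 b.1)
      have hcard_orbit_le : Fintype.card {y : α // y ∈ MulAction.orbit A x} ≤ Fintype.card α :=
        Fintype.card_subtype_le _
      have hcompl : Fintype.card {y : α // y ∉ MulAction.orbit A x}
          = Fintype.card α - Fintype.card {y : α // y ∈ MulAction.orbit A x} :=
        Fintype.card_subtype_compl _
      have horbpos : 0 < Fintype.card {y : α // y ∈ MulAction.orbit A x} :=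
        Fintype.card_pos_iff.mpr ⟨⟨x, hxO⟩⟩
      have hcS : Nat.card (MulAction.stabilizer A x) ^ 3
          ≤ 3 ^ Fintype.card {y : α // y ∉ MulAction.orbit A x} := by
        apply ih _ _ _ hScomm ρ' hρ'inj
        omega
      have horbit : Nat.card A
          = Nat.card (MulAction.orbit A x) * Nat.card (MulAction.stabilizer A x) := by
        rw [← Nat.card_prod]
        exact (Nat.card_congr (MulAction.orbitProdStabilizerEquivGroup A x)).symm
      have horbitcard : Nat.card (MulAction.orbit A x)
          = Fintype.card {y : α // y ∈ MulAction.orbit A x} := by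
        exact Nat.card_eq_fintype_card
      calc Nat.card A ^ 3
          = Nat.card (MulAction.orbit A x) ^ 3 * Nat.card (MulAction.stabilizer A x) ^ 3 := by
            rw [horbit, mul_pow]
        _ ≤ 3 ^ Fintype.card {y : α // y ∈ MulAction.orbit A x}
            * 3 ^ Fintype.card {y : α // y ∉ MulAction.orbit A x} := by
            apply Nat.mul_le_mul _ hcS
            rw [horbitcard]
            exact aux_cube_le_three_pow _
        _ = 3 ^ (Fintype.card {y : α // y ∈ MulAction.orbit A x}
            + Fintype.card {y : α // y ∉ MulAction.orbit A x}) := by rw [pow_add]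
        _ ≤ 3 ^ Fintype.card α := by
            apply Nat.pow_le_pow_right (by norm_num)
            omega

/-- square roots of 1 mod odd prime power -/
lemma aux_zmod_sq_cases {p : ℕ} (hp : p.Prime) (hp2 : p ≠ 2) {a : ℕ} (ha : a ≠ 0)
    (x : ZMod (p ^ a)) (hx : x * x = 1) : x = 1 ∨ x = -1 := by
  haveI : NeZero (p ^ a) := ⟨pow_ne_zero a hp.pos.ne'⟩
  set v : ℤ := (x.val : ℤ) with hv
  have hvx : ((v : ℤ) : ZMod (p ^ a)) = x := by
    rw [hv, Int.cast_natCast, ZMod.natCast_rightInverse x]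
  have hdvd : ((p : ℤ) ^ a) ∣ (v - 1) * (v + 1) := by
    have h0 : (((v - 1) * (v + 1) : ℤ) : ZMod (p ^ a)) = 0 := by
      push_cast [hvx]
      linear_combination hx
    have h1 := (ZMod.intCast_zmod_eq_zero_iff_dvd _ _).mp h0
    exact_mod_cast h1
  have hprime : Prime (p : ℤ) := Nat.prime_iff_prime_int.mp hp
  have key : ((p : ℤ) ^ a ∣ v - 1) ∨ ((p : ℤ) ^ a ∣ v + 1) := by
    by_cases h1 : (p : ℤ) ∣ v + 1
    · right
      have h2 : ¬ (p : ℤ) ∣ v - 1 := by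
        intro h2
        have hd2 : (p : ℤ) ∣ 2 := by
          have := dvd_sub h1 h2
          simpa using this
        have hd2' : p ∣ 2 := by exact_mod_cast hd2
        have := (Nat.prime_dvd_prime_iff_eq hp Nat.prime_two).mp hd2'
        exact hp2 this
      have hcop : IsCoprime ((p : ℤ) ^ a) (v - 1) :=
        ((hprime.coprime_iff_not_dvd).mpr h2).pow_left
      exact hcop.dvd_of_dvd_mul_left hdvd
    · left
      have hcop : IsCoprime ((p : ℤ) ^ a) (v + 1) :=
        ((hprime.coprime_iff_not_dvd).mpr h1).pow_left
      exact hcop.dvd_of_dvd_mul_right hdvd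
  rcases key with h | h
  · left
    have h0 : ((v - 1 : ℤ) : ZMod (p ^ a)) = 0 := by
      rw [ZMod.intCast_zmod_eq_zero_iff_dvd]
      exact_mod_cast h
    push_cast [hvx] at h0
    linear_combination h0
  · right
    have h0 : ((v + 1 : ℤ) : ZMod (p ^ a)) = 0 := by
      rw [ZMod.intCast_zmod_eq_zero_iff_dvd]
      exact_mod_cast h
    push_cast [hvx] at h0
    linear_combination h0

/-- square roots of 1 mod a power of 2 -/
lemma aux_zmod_two_pow_sq_cases {a : ℕ} (ha : a ≠ 0) (x : ZMod (2 ^ a)) (hx : x * x = 1) :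
    x = 1 ∨ x = -1 ∨ x = 1 + (2 : ZMod (2 ^ a)) ^ (a - 1) ∨
      x = -1 + (2 : ZMod (2 ^ a)) ^ (a - 1) := by
  haveI : NeZero (2 ^ a) := ⟨pow_ne_zero a two_ne_zero⟩
  set v : ℤ := (x.val : ℤ) with hv
  have hvx : ((v : ℤ) : ZMod (2 ^ a)) = x := by
    rw [hv, Int.cast_natCast, ZMod.natCast_rightInverse x]
  have hdvd : ((2 : ℤ) ^ a) ∣ (v - 1) * (v + 1) := by
    have h0 : (((v - 1) * (v + 1) : ℤ) : ZMod (2 ^ a)) = 0 := by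
      push_cast [hvx]
      linear_combination hx
    have h1 := (ZMod.intCast_zmod_eq_zero_iff_dvd _ _).mp h0
    exact_mod_cast h1
  -- v is odd
  have hodd : Odd v := by
    rcases Int.even_or_odd v with he | ho
    · exfalso
      obtain ⟨u, hu⟩ := he
      have h2 : (2 : ℤ) ∣ (v - 1) * (v + 1) := dvd_trans (dvd_pow_self 2 ha) hdvd
      have h4 : (2 : ℤ) ∣ (u + u) * (u + u) := ⟨(u + u) * u, by ring⟩
      have : (2 : ℤ) ∣ 1 := by
        have := dvd_sub h4 h2
        have heq : (u + u) * (u + u) - (v - 1) * (v + 1) = 1 := by rw [hu]; ring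
        rwa [heq] at this
      norm_num at this
    · exact ho
  have key : ((2 : ℤ) ^ (a - 1) ∣ v - 1) ∨ ((2 : ℤ) ^ (a - 1) ∣ v + 1) := by
    rcases Nat.lt_or_ge a 2 with ha2 | ha2
    · have h1 : a - 1 = 0 := by omega
      rw [h1, pow_zero]
      exact Or.inl (one_dvd _)
    · obtain ⟨b, rfl⟩ : ∃ b, a = b + 2 := ⟨a - 2, by omega⟩
      obtain ⟨w, hw⟩ := hodd
      have hfact : (v - 1) * (v + 1) = 4 * (w * (w + 1)) := by rw [hw]; ring
      have hdvd2 : (2 : ℤ) ^ b ∣ w * (w + 1) := by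
        have hpow : (2 : ℤ) ^ (b + 2) = 4 * 2 ^ b := by ring
        rw [hpow, hfact] at hdvd
        exact (mul_dvd_mul_iff_left (by norm_num : (4 : ℤ) ≠ 0)).mp hdvd
      have hprime2 : Prime (2 : ℤ) := Int.prime_two
      have ha1 : b + 2 - 1 = b + 1 := by omega
      rcases Int.even_or_odd w with he | ho
      · -- w even, w+1 odd : 2^(a-2) ∣ w, so 2^(a-1) ∣ 2w = v - 1
        left
        have hnd : ¬ (2 : ℤ) ∣ w + 1 := by
          obtain ⟨u, hu⟩ := he
          rintro ⟨t, ht⟩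
          omega
        have hcop : IsCoprime ((2 : ℤ) ^ b) (w + 1) :=
          ((hprime2.coprime_iff_not_dvd).mpr hnd).pow_left
        have hw2 : (2 : ℤ) ^ b ∣ w := hcop.dvd_of_dvd_mul_right hdvd2
        have hveq : v - 1 = 2 * w := by rw [hw]; ring
        rw [hveq, ha1, pow_succ, mul_comm ((2:ℤ) ^ b) 2]
        exact mul_dvd_mul_left 2 hw2
      · -- w odd : 2^(a-2) ∣ w+1, so 2^(a-1) ∣ 2(w+1) = v + 1
        right
        have hnd : ¬ (2 : ℤ) ∣ w := by
          obtain ⟨u, hu⟩ := ho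
          rintro ⟨t, ht⟩
          omega
        have hcop : IsCoprime ((2 : ℤ) ^ b) w :=
          ((hprime2.coprime_iff_not_dvd).mpr hnd).pow_left
        have hw2 : (2 : ℤ) ^ b ∣ w + 1 := hcop.dvd_of_dvd_mul_left hdvd2
        have hveq : v + 1 = 2 * (w + 1) := by rw [hw]; ring
        rw [hveq, ha1, pow_succ, mul_comm ((2:ℤ) ^ b) 2]
        exact mul_dvd_mul_left 2 hw2
  have hzero : ((2 : ZMod (2 ^ a)) ^ (a - 1)) * 2 = 0 := by
    have h1 : ((2 : ZMod (2 ^ a)) ^ (a - 1)) * 2 = (2 : ZMod (2 ^ a)) ^ a := by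
      rw [← pow_succ]
      congr 1
      omega
    rw [h1]
    have h2 := ZMod.natCast_self (2 ^ a)
    push_cast at h2
    exact h2
  rcases key with ⟨t, ht⟩ | ⟨t, ht⟩
  · have hveq : v = 1 + 2 ^ (a - 1) * t := by omega
    rcases Int.even_or_odd t with ⟨u, hu⟩ | ⟨u, hu⟩
    · left
      rw [← hvx, hveq, hu]
      push_cast
      linear_combination (u : ZMod (2 ^ a)) * hzero
    · right; right; left
      rw [← hvx, hveq, hu]
      push_cast
      linear_combination (u : ZMod (2 ^ a)) * hzero
  · have hveq : v = -1 + 2 ^ (a - 1) * t := by omega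
    rcases Int.even_or_odd t with ⟨u, hu⟩ | ⟨u, hu⟩
    · right; left
      rw [← hvx, hveq, hu]
      push_cast
      linear_combination (u : ZMod (2 ^ a)) * hzero
    · right; right; right
      rw [← hvx, hveq, hu]
      push_cast
      linear_combination (u : ZMod (2 ^ a)) * hzero

open scoped Classical

/-- number of square roots of unity in `(ZMod n)ˣ` -/
noncomputable def aux_sq1 (n : ℕ) : ℕ := Nat.card {u : (ZMod n)ˣ // u * u = 1}

lemma aux_sq1_pos (n : ℕ) [NeZero n] : 0 < aux_sq1 n := by
  haveI : Nonempty {u : (ZMod n)ˣ // u * u = 1} := ⟨⟨1, mul_one 1⟩⟩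
  exact Nat.card_pos

lemma aux_sq1_le_totient (n : ℕ) (hn : n ≠ 0) : aux_sq1 n ≤ n.totient := by
  haveI : NeZero n := ⟨hn⟩
  have h1 : aux_sq1 n ≤ Nat.card (ZMod n)ˣ :=
    Nat.card_le_card_of_injective Subtype.val Subtype.val_injective
  rwa [Nat.card_eq_fintype_card, ZMod.card_units_eq_totient] at h1

lemma aux_unit_sq (n : ℕ) (u : (ZMod n)ˣ) (h : u * u = 1) :
    (u : ZMod n) * (u : ZMod n) = 1 := by
  have := congrArg (Units.val) h
  simpa using this

lemma aux_sq1_odd_prime_pow {p : ℕ} (hp : p.Prime) (hp2 : p ≠ 2) {a : ℕ} (ha : a ≠ 0) :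
    aux_sq1 (p ^ a) ≤ 2 := by
  haveI : NeZero (p ^ a) := ⟨pow_ne_zero a hp.pos.ne'⟩
  have hinj : Function.Injective
      (fun u : {u : (ZMod (p ^ a))ˣ // u * u = 1} =>
        (⟨(u.1 : ZMod (p ^ a)), by
          simp only [Set.mem_insert_iff, Set.mem_singleton_iff]
          exact aux_zmod_sq_cases hp hp2 ha _ (aux_unit_sq _ _ u.2)⟩ :
          ({1, -1} : Set (ZMod (p ^ a))))) := by
    intro u w h
    exact Subtype.ext (Units.ext (congrArg Subtype.val h))
  calc aux_sq1 (p ^ a) ≤ Nat.card ({1, -1} : Set (ZMod (p ^ a))) :=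
        Nat.card_le_card_of_injective _ hinj
    _ ≤ 2 := by
        rw [Nat.card_coe_set_eq]
        calc ({1, -1} : Set (ZMod (p ^ a))).ncard ≤ ({-1} : Set (ZMod (p ^ a))).ncard + 1 :=
              Set.ncard_insert_le _ _
          _ ≤ 2 := by simp

lemma aux_sq1_two_pow {a : ℕ} (ha : a ≠ 0) : aux_sq1 (2 ^ a) ≤ 4 := by
  haveI : NeZero (2 ^ a) := ⟨pow_ne_zero a two_ne_zero⟩
  set c : ZMod (2 ^ a) := (2 : ZMod (2 ^ a)) ^ (a - 1) with hc
  have hinj : Function.Injective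
      (fun u : {u : (ZMod (2 ^ a))ˣ // u * u = 1} =>
        (⟨(u.1 : ZMod (2 ^ a)), by
          simp only [Set.mem_insert_iff, Set.mem_singleton_iff]
          exact aux_zmod_two_pow_sq_cases ha _ (aux_unit_sq _ _ u.2)⟩ :
          ({1, -1, 1 + c, -1 + c} : Set (ZMod (2 ^ a))))) := by
    intro u w h
    exact Subtype.ext (Units.ext (congrArg Subtype.val h))
  calc aux_sq1 (2 ^ a) ≤ Nat.card ({1, -1, 1 + c, -1 + c} : Set (ZMod (2 ^ a))) :=
        Nat.card_le_card_of_injective _ hinj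
    _ ≤ 4 := by
        rw [Nat.card_coe_set_eq]
        calc ({1, -1, 1 + c, -1 + c} : Set (ZMod (2 ^ a))).ncard
            ≤ ({-1, 1 + c, -1 + c} : Set (ZMod (2 ^ a))).ncard + 1 := Set.ncard_insert_le _ _
          _ ≤ (({1 + c, -1 + c} : Set (ZMod (2 ^ a))).ncard + 1) + 1 := by
              have := Set.ncard_insert_le (-1 : ZMod (2 ^ a)) ({1 + c, -1 + c} : Set (ZMod (2 ^ a)))
              omega
          _ ≤ ((({-1 + c} : Set (ZMod (2 ^ a))).ncard + 1) + 1) + 1 := by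
              have := Set.ncard_insert_le (1 + c : ZMod (2 ^ a)) ({-1 + c} : Set (ZMod (2 ^ a)))
              omega
          _ ≤ 4 := by simp

lemma aux_sq1_mul_le {m n : ℕ} (hm : m ≠ 0) (hn : n ≠ 0) (h : m.Coprime n) :
    aux_sq1 (m * n) ≤ aux_sq1 m * aux_sq1 n := by
  haveI : NeZero m := ⟨hm⟩
  haveI : NeZero n := ⟨hn⟩
  haveI : NeZero (m * n) := ⟨mul_ne_zero hm hn⟩
  let e : (ZMod (m * n))ˣ ≃* (ZMod m)ˣ × (ZMod n)ˣ :=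
    (Units.mapEquiv (ZMod.chineseRemainder h).toMulEquiv).trans MulEquiv.prodUnits
  have hsq : ∀ u : {u : (ZMod (m * n))ˣ // u * u = 1},
      (e u.1).1 * (e u.1).1 = 1 ∧ (e u.1).2 * (e u.1).2 = 1 := by
    intro u
    have h1 : e u.1 * e u.1 = 1 := by rw [← map_mul, u.2, map_one]
    constructor
    · have := congrArg Prod.fst h1
      simpa using this
    · have := congrArg Prod.snd h1
      simpa using this
  have hinj : Function.Injective
      (fun u : {u : (ZMod (m * n))ˣ // u * u = 1} =>
        ((⟨(e u.1).1, (hsq u).1⟩ : {u : (ZMod m)ˣ // u * u = 1}),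
         (⟨(e u.1).2, (hsq u).2⟩ : {u : (ZMod n)ˣ // u * u = 1}))) := by
    intro u w huw
    have h1 : (e u.1).1 = (e w.1).1 := congrArg (fun t => (t.1 : {u : (ZMod m)ˣ // u * u = 1}).1) huw
    have h2 : (e u.1).2 = (e w.1).2 := congrArg (fun t => (t.2 : {u : (ZMod n)ˣ // u * u = 1}).1) huw
    apply Subtype.ext
    apply e.injective
    exact Prod.ext h1 h2
  calc aux_sq1 (m * n)
      ≤ Nat.card ({u : (ZMod m)ˣ // u * u = 1} × {u : (ZMod n)ˣ // u * u = 1}) :=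
        Nat.card_le_card_of_injective _ hinj
    _ = aux_sq1 m * aux_sq1 n := Nat.card_prod _ _

/-- number of prime factors that are at least 7 -/
def aux_kfac (n : ℕ) : ℕ := (n.primeFactors.filter (fun p => 7 ≤ p)).card

lemma aux_L1 : ∀ n : ℕ, n ≤ 2 ^ n.primeFactors.card * n.totient := by
  intro n
  induction n using Nat.recOnPosPrimePosCoprime with
  | prime_pow p k hp hk =>
    have hp' : p.Prime := hp
    rw [Nat.primeFactors_pow p hk.ne', hp'.primeFactors, Finset.card_singleton,
      Nat.totient_prime_pow hp' hk, pow_one]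
    calc p ^ k = p ^ (k - 1) * p := by
          rw [← pow_succ]
          congr 1
          omega
      _ ≤ p ^ (k - 1) * (2 * (p - 1)) := by
          apply Nat.mul_le_mul_left
          have := hp'.two_le
          omega
      _ = 2 * (p ^ (k - 1) * (p - 1)) := by ring
  | zero => exact Nat.zero_le _
  | one => norm_num
  | coprime a b ha hb hab iha ihb =>
    have ha0 : a ≠ 0 := by omega
    have hb0 : b ≠ 0 := by omega
    rw [Nat.Coprime.primeFactors_mul hab, Finset.card_union_of_disjoint
      (Nat.Coprime.disjoint_primeFactors hab), Nat.totient_mul hab, pow_add]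
    calc a * b ≤ (2 ^ a.primeFactors.card * a.totient) * (2 ^ b.primeFactors.card * b.totient) :=
          Nat.mul_le_mul iha ihb
      _ = 2 ^ a.primeFactors.card * 2 ^ b.primeFactors.card * (a.totient * b.totient) := by ring

lemma aux_L2 : ∀ n : ℕ, n ≠ 0 →
    aux_sq1 n ≤ 2 ^ n.primeFactors.card * (if 2 ∣ n then 2 else 1) := by
  intro n
  induction n using Nat.recOnPosPrimePosCoprime with
  | prime_pow p k hp hk =>
    intro _
    have hp' : p.Prime := hp
    rw [Nat.primeFactors_pow p hk.ne', hp'.primeFactors, Finset.card_singleton, pow_one]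
    by_cases hp2 : p = 2
    · subst hp2
      have h2 : (2 : ℕ) ∣ 2 ^ k := dvd_pow_self 2 hk.ne'
      rw [if_pos h2]
      exact (aux_sq1_two_pow hk.ne').trans (by norm_num)
    · have h2 : ¬ (2 : ℕ) ∣ p ^ k := by
        intro hd
        exact hp2 ((Nat.prime_dvd_prime_iff_eq Nat.prime_two hp').mp
          (Nat.Prime.dvd_of_dvd_pow Nat.prime_two hd)).symm
      rw [if_neg h2, mul_one]
      exact aux_sq1_odd_prime_pow hp' hp2 hk.ne'
  | zero => intro h; exact absurd rfl h
  | one =>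
    intro _
    have h1 : aux_sq1 1 ≤ Nat.totient 1 := aux_sq1_le_totient 1 one_ne_zero
    simpa using h1
  | coprime a b ha hb hab iha ihb =>
    intro _
    have ha0 : a ≠ 0 := by omega
    have hb0 : b ≠ 0 := by omega
    rw [Nat.Coprime.primeFactors_mul hab, Finset.card_union_of_disjoint
      (Nat.Coprime.disjoint_primeFactors hab), pow_add]
    have hmain : aux_sq1 (a * b)
        ≤ (2 ^ a.primeFactors.card * (if 2 ∣ a then 2 else 1))
          * (2 ^ b.primeFactors.card * (if 2 ∣ b then 2 else 1)) :=
      (aux_sq1_mul_le ha0 hb0 hab).trans (Nat.mul_le_mul (iha ha0) (ihb hb0))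
    by_cases h2a : 2 ∣ a
    · by_cases h2b : 2 ∣ b
      · exfalso
        have : (2 : ℕ) ∣ Nat.gcd a b := Nat.dvd_gcd h2a h2b
        rw [Nat.Coprime] at hab
        omega
      · rw [if_pos h2a, if_neg h2b] at hmain
        rw [if_pos (Dvd.dvd.mul_right h2a b)]
        calc aux_sq1 (a * b) ≤ 2 ^ a.primeFactors.card * 2 * (2 ^ b.primeFactors.card * 1) :=
              hmain
          _ = 2 ^ a.primeFactors.card * 2 ^ b.primeFactors.card * 2 := by ring
    · by_cases h2b : 2 ∣ b
      · rw [if_neg h2a, if_pos h2b] at hmain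
        rw [if_pos (Dvd.dvd.mul_left h2b a)]
        calc aux_sq1 (a * b) ≤ 2 ^ a.primeFactors.card * 1 * (2 ^ b.primeFactors.card * 2) :=
              hmain
          _ = 2 ^ a.primeFactors.card * 2 ^ b.primeFactors.card * 2 := by ring
      · rw [if_neg h2a, if_neg h2b] at hmain
        have h2ab : ¬ (2 : ℕ) ∣ a * b := by
          intro hd
          rcases (Nat.Prime.dvd_mul Nat.prime_two).mp hd with h | h
          · exact h2a h
          · exact h2b h
        rw [if_neg h2ab]
        calc aux_sq1 (a * b) ≤ 2 ^ a.primeFactors.card * 1 * (2 ^ b.primeFactors.card * 1) :=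
              hmain
          _ = 2 ^ a.primeFactors.card * 2 ^ b.primeFactors.card * 1 := by ring

lemma aux_L3 : ∀ n : ℕ, n ≠ 0 → aux_sq1 n * 3 ^ aux_kfac n ≤ n.totient := by
  intro n
  induction n using Nat.recOnPosPrimePosCoprime with
  | prime_pow p k hp hk =>
    intro _
    have hp' : p.Prime := hp
    have hfac : aux_kfac (p ^ k) = (({p} : Finset ℕ).filter (fun q => 7 ≤ q)).card := by
      rw [aux_kfac, Nat.primeFactors_pow p hk.ne', hp'.primeFactors]
    by_cases h7 : 7 ≤ p
    · have hcard : aux_kfac (p ^ k) = 1 := by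
        rw [hfac, Finset.filter_singleton, if_pos h7, Finset.card_singleton]
      rw [hcard, pow_one]
      have hsq : aux_sq1 (p ^ k) ≤ 2 := aux_sq1_odd_prime_pow hp' (by omega) hk.ne'
      have htot : 6 ≤ (p ^ k).totient := by
        rw [Nat.totient_prime_pow hp' hk]
        have h1 : 1 ≤ p ^ (k - 1) := Nat.one_le_pow _ _ hp'.pos
        have h6 : 6 ≤ p - 1 := by omega
        calc 6 = 1 * 6 := by norm_num
          _ ≤ p ^ (k - 1) * (p - 1) := Nat.mul_le_mul h1 h6
      omega
    · have hcard : aux_kfac (p ^ k) = 0 := by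
        rw [hfac, Finset.filter_singleton, if_neg h7, Finset.card_empty]
      rw [hcard, pow_zero, mul_one]
      exact aux_sq1_le_totient _ (pow_ne_zero k hp'.pos.ne')
  | zero => intro h; exact absurd rfl h
  | one =>
    intro _
    have h1 : aux_sq1 1 ≤ Nat.totient 1 := aux_sq1_le_totient 1 one_ne_zero
    simpa [aux_kfac] using h1
  | coprime a b ha hb hab iha ihb =>
    intro _
    have ha0 : a ≠ 0 := by omega
    have hb0 : b ≠ 0 := by omega
    have hkmul : aux_kfac (a * b) = aux_kfac a + aux_kfac b := by
      rw [aux_kfac, aux_kfac, aux_kfac, Nat.Coprime.primeFactors_mul hab, Finset.filter_union]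
      exact Finset.card_union_of_disjoint
        (Finset.disjoint_filter_filter (Nat.Coprime.disjoint_primeFactors hab))
    rw [hkmul, Nat.totient_mul hab, pow_add]
    calc aux_sq1 (a * b) * (3 ^ aux_kfac a * 3 ^ aux_kfac b)
        ≤ aux_sq1 a * aux_sq1 b * (3 ^ aux_kfac a * 3 ^ aux_kfac b) :=
          Nat.mul_le_mul_right _ (aux_sq1_mul_le ha0 hb0 hab)
      _ = (aux_sq1 a * 3 ^ aux_kfac a) * (aux_sq1 b * 3 ^ aux_kfac b) := by ring
      _ ≤ a.totient * b.totient := Nat.mul_le_mul (iha ha0) (ihb hb0)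

lemma aux_omega_le_kfac (n : ℕ) : n.primeFactors.card ≤ aux_kfac n + 3 := by
  classical
  have hsplit := Finset.card_filter_add_card_filter_not
    (s := n.primeFactors) (p := fun p => 7 ≤ p)
  have hsub : n.primeFactors.filter (fun p => ¬ 7 ≤ p) ⊆ ({2, 3, 5} : Finset ℕ) := by
    intro p hp
    rw [Finset.mem_filter] at hp
    obtain ⟨hp1, hp2⟩ := hp
    have hprime : p.Prime := Nat.prime_of_mem_primeFactors hp1
    have h2 := hprime.two_le
    simp only [Finset.mem_insert, Finset.mem_singleton]
    interval_cases p <;>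
      first
        | (exact absurd hprime (by decide))
        | (left; rfl)
        | (right; left; rfl)
        | (right; right; rfl)
  have hle : (n.primeFactors.filter (fun p => ¬ 7 ≤ p)).card ≤ 3 :=
    (Finset.card_le_card hsub).trans (by decide)
  rw [aux_kfac]
  omega

set_option maxHeartbeats 2000000 in
set_option synthInstance.maxHeartbeats 400000 in
/-- Bound on the order of the `T`-matrix of a rank-`r` modular category:
`N = ord T ≤ 2^(2r/3+8) ⬝ 3^(2r/3)`.  The modular data is abstracted by its
relevant properties: `F_S` is an intermediate field of `F_T = ℚ(ζ_N)` over `ℚ`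
such that `Gal(F_T/F_S)` is an elementary abelian `2`-group and `Gal(F_S/ℚ)`
embeds into the symmetric group `S_r`. -/
theorem stmt_12 (r N : ℕ) (hN : 0 < N)
    (FS : IntermediateField ℚ (CyclotomicField N ℚ))
    (h2 : ∀ σ : CyclotomicField N ℚ ≃ₐ[FS] CyclotomicField N ℚ, σ * σ = 1)
    (hemb : ∃ φ : (FS ≃ₐ[ℚ] FS) →* Equiv.Perm (Fin r), Function.Injective φ) :
    (N : ℝ) ≤ 2 ^ ((2 * r : ℝ) / 3 + 8) * 3 ^ ((2 * r : ℝ) / 3) := by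
  classical
  haveI : NeZero N := ⟨hN.ne'⟩
  haveI : NeZero (N : ℚ) := ⟨by exact_mod_cast hN.ne'⟩
  haveI : IsCyclotomicExtension {N} ℚ (CyclotomicField N ℚ) :=
    CyclotomicField.isCyclotomicExtension N ℚ
  have hirr : Irreducible (Polynomial.cyclotomic N ℚ) :=
    Polynomial.cyclotomic.irreducible_rat hN
  haveI : FiniteDimensional ℚ (CyclotomicField N ℚ) :=
    IsCyclotomicExtension.finiteDimensional {N} ℚ (CyclotomicField N ℚ)
  haveI : IsGalois ℚ (CyclotomicField N ℚ) := IsCyclotomicExtension.isGalois {N} ℚ (CyclotomicField N ℚ)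
  -- the Galois group is commutative
  have e : ((CyclotomicField N ℚ) ≃ₐ[ℚ] (CyclotomicField N ℚ)) ≃* (ZMod N)ˣ := IsCyclotomicExtension.autEquivPow (CyclotomicField N ℚ) hirr
  have hcommL : ∀ σ τ : (CyclotomicField N ℚ) ≃ₐ[ℚ] (CyclotomicField N ℚ), σ * τ = τ * σ := by
    intro σ τ
    apply e.injective
    rw [map_mul, map_mul, mul_comm]
  -- FS is Galois over ℚ
  haveI hnormal : (IntermediateField.fixingSubgroup FS).Normal := by
    constructor
    intro x hx g
    have hgx : g * x * g⁻¹ = x := by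
      rw [hcommL g x, mul_assoc]
      simp
    rw [hgx]
    exact hx
  haveI hgalFS : IsGalois ℚ FS := by
    have hfix := IsGalois.fixedField_fixingSubgroup FS
    have inst := IsGalois.of_fixedField_normal_subgroup (IntermediateField.fixingSubgroup FS)
    rwa [hfix] at inst
  -- degrees
  set d := Module.finrank ℚ FS with hd
  set h := Module.finrank FS (CyclotomicField N ℚ) with hh
  have htower : d * h = N.totient := by
    rw [hd, hh, Module.finrank_mul_finrank ℚ FS (CyclotomicField N ℚ)]
    exact IsCyclotomicExtension.finrank (CyclotomicField N ℚ) hirr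
  -- Gal(FS/ℚ) is commutative
  have hcommFS : ∀ σ τ : FS ≃ₐ[ℚ] FS, σ * τ = τ * σ := by
    intro σ τ
    obtain ⟨σ', rfl⟩ := AlgEquiv.restrictNormalHom_surjective (F := ℚ) (K₁ := FS) (E := CyclotomicField N ℚ) σ
    obtain ⟨τ', rfl⟩ := AlgEquiv.restrictNormalHom_surjective (F := ℚ) (K₁ := FS) (E := CyclotomicField N ℚ) τ
    rw [← map_mul, ← map_mul, hcommL]
  -- |Gal(FS/ℚ)| = d and the cube bound
  obtain ⟨φ, hφ⟩ := hemb
  have hcardFS : Nat.card (FS ≃ₐ[ℚ] FS) = d := by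
    exact IsGalois.card_aut_eq_finrank ℚ FS
  have hd3 : d ^ 3 ≤ 3 ^ r := by
    have := aux_abelian_perm_card_cube_le r (Fin r) (by simp)
      (FS ≃ₐ[ℚ] FS) hcommFS φ hφ
    rwa [hcardFS, Fintype.card_fin] at this
  -- |Gal(L/FS)| = h and h ≤ sq1 N
  have hcardH : Nat.card ((CyclotomicField N ℚ) ≃ₐ[FS] (CyclotomicField N ℚ)) = h := by
    exact IsGalois.card_aut_eq_finrank FS (CyclotomicField N ℚ)
  have hres_mul : ∀ σ τ : (CyclotomicField N ℚ) ≃ₐ[FS] (CyclotomicField N ℚ),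
      (σ * τ).restrictScalars ℚ = (σ.restrictScalars ℚ) * (τ.restrictScalars ℚ) := by
    intro σ τ
    ext x
    rfl
  have hres_one : ((1 : (CyclotomicField N ℚ) ≃ₐ[FS] (CyclotomicField N ℚ)).restrictScalars ℚ) = 1 := by
    ext x
    rfl
  have hHle : h ≤ aux_sq1 N := by
    rw [← hcardH, aux_sq1]
    apply Nat.card_le_card_of_injective
      (fun σ : (CyclotomicField N ℚ) ≃ₐ[FS] (CyclotomicField N ℚ) =>
        (⟨e (σ.restrictScalars ℚ), by
          rw [← map_mul, ← hres_mul, h2 σ, hres_one, map_one]⟩ :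
          {u : (ZMod N)ˣ // u * u = 1}))
    intro σ τ hst
    have h1 : e (σ.restrictScalars ℚ) = e (τ.restrictScalars ℚ) := congrArg Subtype.val hst
    exact AlgEquiv.restrictScalars_injective ℚ (e.injective h1)
  -- numeric facts
  have hsq1pos : 0 < aux_sq1 N := aux_sq1_pos N
  have h3k : 3 ^ aux_kfac N ≤ d := by
    have hle : aux_sq1 N * 3 ^ aux_kfac N ≤ aux_sq1 N * d := by
      calc aux_sq1 N * 3 ^ aux_kfac N ≤ N.totient := aux_L3 N hN.ne'
        _ = d * h := htower.symm
        _ ≤ d * aux_sq1 N := Nat.mul_le_mul_left d hHle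
        _ = aux_sq1 N * d := mul_comm _ _
    exact Nat.le_of_mul_le_mul_left hle hsq1pos
  have hkr : 3 * aux_kfac N ≤ r := by
    have h1 : (3 : ℕ) ^ (3 * aux_kfac N) ≤ 3 ^ r := by
      calc (3 : ℕ) ^ (3 * aux_kfac N) = (3 ^ aux_kfac N) ^ 3 := by
            rw [← pow_mul, mul_comm]
        _ ≤ d ^ 3 := Nat.pow_le_pow_left h3k 3
        _ ≤ 3 ^ r := hd3
    exact (Nat.pow_le_pow_iff_right (by norm_num)).mp h1
  set ω := N.primeFactors.card with hω
  have hωk : ω ≤ aux_kfac N + 3 := aux_omega_le_kfac N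
  -- N ≤ 2^(2ω+1) * d  in ℕ
  have hNnat : N ≤ 2 ^ (2 * ω + 1) * d := by
    calc N ≤ 2 ^ ω * N.totient := aux_L1 N
      _ = 2 ^ ω * (d * h) := by rw [htower]
      _ ≤ 2 ^ ω * (d * (2 ^ ω * 2)) := by
          apply Nat.mul_le_mul_left
          apply Nat.mul_le_mul_left
          calc h ≤ aux_sq1 N := hHle
            _ ≤ 2 ^ ω * (if 2 ∣ N then 2 else 1) := aux_L2 N hN.ne'
            _ ≤ 2 ^ ω * 2 := by
                apply Nat.mul_le_mul_left
                split <;> omega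
      _ = 2 ^ (2 * ω + 1) * d := by ring
  -- pass to ℝ
  have hdR : (d : ℝ) ≤ (3 : ℝ) ^ ((r : ℝ) / 3) := by
    have hd0 : (0 : ℝ) ≤ (d : ℝ) := Nat.cast_nonneg d
    have h1 : ((d : ℝ)) ^ (3 : ℕ) ≤ (3 : ℝ) ^ (r : ℕ) := by
      exact_mod_cast hd3
    have h2 : (((d : ℝ)) ^ (3 : ℕ)) ^ ((1 : ℝ) / 3) ≤ ((3 : ℝ) ^ (r : ℕ)) ^ ((1 : ℝ) / 3) :=
      Real.rpow_le_rpow (by positivity) h1 (by norm_num)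
    calc (d : ℝ) = (((d : ℝ)) ^ (3 : ℕ)) ^ ((1 : ℝ) / 3) := by
          rw [← Real.rpow_natCast (d : ℝ) 3, ← Real.rpow_mul hd0]
          norm_num
      _ ≤ ((3 : ℝ) ^ (r : ℕ)) ^ ((1 : ℝ) / 3) := h2
      _ = (3 : ℝ) ^ ((r : ℝ) / 3) := by
          rw [← Real.rpow_natCast (3 : ℝ) r, ← Real.rpow_mul (by norm_num)]
          ring_nf
  have hkR : (aux_kfac N : ℝ) ≤ (r : ℝ) / 3 := by
    have : (3 * aux_kfac N : ℝ) ≤ (r : ℝ) := by exact_mod_cast hkr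
    linarith
  have h2ω : (2 * ω + 1 : ℝ) ≤ (2 * r : ℝ) / 3 + 8 := by
    have hωR : (ω : ℝ) ≤ (aux_kfac N : ℝ) + 3 := by exact_mod_cast hωk
    have : (2 * r : ℝ) / 3 = 2 * ((r : ℝ) / 3) := by ring
    rw [this]
    linarith
  calc (N : ℝ) ≤ (2 : ℝ) ^ (2 * ω + 1 : ℕ) * (d : ℝ) := by exact_mod_cast hNnat
    _ ≤ (2 : ℝ) ^ ((2 * r : ℝ) / 3 + 8) * (3 : ℝ) ^ ((r : ℝ) / 3) := by
        apply mul_le_mul _ hdR (Nat.cast_nonneg d) (by positivity)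
        rw [← Real.rpow_natCast (2 : ℝ) (2 * ω + 1)]
        apply Real.rpow_le_rpow_of_exponent_le (by norm_num)
        push_cast
        exact h2ω
    _ ≤ (2 : ℝ) ^ ((2 * r : ℝ) / 3 + 8) * (3 : ℝ) ^ ((2 * r : ℝ) / 3) := by
        apply mul_le_mul_of_nonneg_left _ (by positivity)
        apply Real.rpow_le_rpow_of_exponent_le (by norm_num)
        have : (0 : ℝ) ≤ (r : ℝ) := Nat.cast_nonneg r
        have heq : (2 * r : ℝ) / 3 = 2 * ((r : ℝ) / 3) := by ring
        linarith [heq]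
end
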